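/- arXiv:1009.4170 — 2 statements merged into one kernel-verified Lean document; each statement's English description precedes it below -/
import Mathlib

section
/- The number of partitions in the dominance interval [(a,1^{y+1}), (a+1,1^y)] (all partitions ν of a+y+1 with (a,1^{y+1}) ⪯ ν ⪯ (a+1,1^y)) is exactly 3 when a ≥ 3 and y ≥ 1; namely the interval consists of (a,1^{y+1}), (a,2,1^{y−1}), and (a+1,1^y). -/
/-! Dominance compares partial sums. The lower end of the interval forces `ν₁ ≥ a`, the
upper end forces `ν₁ ≤ a + 1`, `ν₁ + ν₂ ≤ a + 2` and `ν₁ + ν₂ + ν₃ ≤ a + 3`, and a partition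
whose first part is `1` consists of ones; this leaves only the three listed partitions, which
form the chain `(a,1^{y+1}) ⪯ (a,2,1^{y-1}) ⪯ (a+1,1^y)`. -/

def part (l : List ℕ) (i : ℕ) : ℕ := l.getD i 0

def IsPartitionOf (n : ℕ) (l : List ℕ) : Prop :=
  l.Pairwise (· ≥ ·) ∧ (∀ p ∈ l, 0 < p) ∧ l.sum = n

def Dom (a b : ℕ → ℕ) : Prop :=
  ∀ i, ∑ j ∈ Finset.range i, a j ≤ ∑ j ∈ Finset.range i, b j

open List

theorem sum_range_part (l : List ℕ) (i : ℕ) :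
    ∑ j ∈ Finset.range i, part l j = (l.take i).sum := by
  induction l generalizing i with
  | nil => simp [part]
  | cons x t ih =>
    cases i with
    | zero => simp
    | succ i =>
      rw [Finset.sum_range_succ', take_succ_cons, sum_cons, ← ih, add_comm]
      rfl

theorem dom_part_iff {l l' : List ℕ} :
    Dom (part l) (part l') ↔ ∀ i, (l.take i).sum ≤ (l'.take i).sum := by
  simp only [Dom, sum_range_part]

theorem Dom.refl (f : ℕ → ℕ) : Dom f f := fun _ => le_rfl

theorem Dom.trans {f g h : ℕ → ℕ} (hfg : Dom f g) (hgh : Dom g h) : Dom f h :=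
  fun i => (hfg i).trans (hgh i)

theorem sum_take_succ_cons_replicate_one (c m i : ℕ) :
    ((c :: replicate m 1).take (i + 1)).sum = c + min i m := by
  simp [take_replicate, sum_replicate]

theorem sum_take_succ_succ_cons_cons_replicate_one (c d m i : ℕ) :
    ((c :: d :: replicate m 1).take (i + 2)).sum = c + d + min i m := by
  simp [take_replicate, sum_replicate, add_assoc]

namespace IsPartitionOf

theorem replicate_one (m : ℕ) : IsPartitionOf m (replicate m 1) :=
  ⟨pairwise_replicate.mpr (Or.inr le_rfl), fun p hp => by simp [eq_of_mem_replicate hp],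
    by simp [sum_replicate]⟩

theorem cons {n x : ℕ} {l : List ℕ} (h : IsPartitionOf n l) (hx : 0 < x)
    (hle : ∀ p ∈ l, p ≤ x) : IsPartitionOf (x + n) (x :: l) :=
  ⟨pairwise_cons.mpr ⟨hle, h.1⟩, forall_mem_cons.mpr ⟨hx, h.2.1⟩, by simp [h.2.2]⟩

theorem tail {n x : ℕ} {l : List ℕ} (h : IsPartitionOf n (x :: l)) :
    IsPartitionOf (n - x) l :=
  ⟨(pairwise_cons.mp h.1).2, fun p hp => h.2.1 p (mem_cons_of_mem x hp), by
    simp [← h.2.2]⟩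

theorem eq_replicate_one {n : ℕ} {l : List ℕ} (h : IsPartitionOf n l)
    (h1 : (l.take 1).sum ≤ 1) : l = replicate n 1 := by
  obtain ⟨hsorted, hpos, hsum⟩ := h
  cases l with
  | nil => simp [← hsum]
  | cons x t =>
    have hx : x ≤ 1 := by simpa using h1
    have hall : ∀ p ∈ x :: t, p = 1 := by
      intro p hp
      have := hpos p hp
      rcases mem_cons.mp hp with rfl | hp
      · omega
      · have := (pairwise_cons.mp hsorted).1 p hp; omega
    rw [eq_replicate_length.mpr hall, ← hsum, eq_replicate_length.mpr hall]
    simp [sum_replicate]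

end IsPartitionOf

theorem isPartitionOf_hook {a : ℕ} (ha : 1 ≤ a) (m : ℕ) :
    IsPartitionOf (a + m) (a :: replicate m 1) :=
  (IsPartitionOf.replicate_one m).cons ha fun p hp => by rw [eq_of_mem_replicate hp]; exact ha

theorem isPartitionOf_hook_two {a : ℕ} (ha : 2 ≤ a) (m : ℕ) :
    IsPartitionOf (a + (2 + m)) (a :: 2 :: replicate m 1) :=
  (isPartitionOf_hook (a := 2) (by norm_num) m).cons (by omega) fun p hp => by
    rcases mem_cons.mp hp with rfl | hp
    · exact ha
    · rw [eq_of_mem_replicate hp]; omega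

theorem dom_hook_hook_two (a m : ℕ) :
    Dom (part (a :: replicate (m + 2) 1)) (part (a :: 2 :: replicate m 1)) := by
  rw [dom_part_iff]
  rintro (_ | _ | i)
  · simp
  · simp
  · rw [sum_take_succ_cons_replicate_one, sum_take_succ_succ_cons_cons_replicate_one]
    omega

theorem dom_hook_two_hook_succ (a m : ℕ) :
    Dom (part (a :: 2 :: replicate m 1)) (part ((a + 1) :: replicate (m + 1) 1)) := by
  rw [dom_part_iff]
  rintro (_ | _ | i)
  · simp
  · simp
  · rw [sum_take_succ_cons_replicate_one, sum_take_succ_succ_cons_cons_replicate_one]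
    omega

theorem eq_of_dom_hook_of_dom_hook_succ {a m : ℕ} {ν : List ℕ}
    (hν : IsPartitionOf (a + m + 2) ν)
    (hlow : Dom (part (a :: replicate (m + 2) 1)) (part ν))
    (hup : Dom (part ν) (part ((a + 1) :: replicate (m + 1) 1))) :
    ν = a :: replicate (m + 2) 1 ∨ ν = a :: 2 :: replicate m 1 ∨
      ν = (a + 1) :: replicate (m + 1) 1 := by
  rw [dom_part_iff] at hlow hup
  obtain ⟨x, t, rfl⟩ :=
    exists_cons_of_ne_nil (l := ν) (by rintro rfl; simp [IsPartitionOf] at hν)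
  have ht := hν.tail
  have hlow1 : a ≤ x := by simpa using hlow 1
  have hup1 : x ≤ a + 1 := by simpa using hup 1
  have hup2 : x + (t.take 1).sum ≤ a + 2 := by simpa [take_replicate] using hup 2
  obtain rfl | rfl : a = x ∨ a + 1 = x := by omega
  · by_cases ht1 : (t.take 1).sum ≤ 1
    · exact Or.inl (by rw [ht.eq_replicate_one ht1]; congr 2; omega)
    obtain ⟨b, t', rfl⟩ := exists_cons_of_ne_nil (l := t) (by rintro rfl; simp at ht1)
    simp only [take_succ_cons, take_zero, sum_cons, sum_nil] at ht1 hup2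
    obtain rfl : b = 2 := by omega
    have hup3 : a + (2 + (t'.take 1).sum) ≤ a + 1 + min 2 (m + 1) := by
      simpa [take_replicate] using hup 3
    refine Or.inr (Or.inl ?_)
    rw [ht.tail.eq_replicate_one (by omega)]
    congr 3
    omega
  · refine Or.inr (Or.inr ?_)
    rw [ht.eq_replicate_one (by omega)]
    congr 2
    omega

theorem mem_hook_interval_iff {a m : ℕ} (ha : 2 ≤ a) (ν : List ℕ) :
    (IsPartitionOf (a + m + 2) ν ∧ Dom (part (a :: replicate (m + 2) 1)) (part ν) ∧
        Dom (part ν) (part ((a + 1) :: replicate (m + 1) 1))) ↔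
      (ν = a :: replicate (m + 2) 1 ∨ ν = a :: 2 :: replicate m 1 ∨
        ν = (a + 1) :: replicate (m + 1) 1) := by
  have hlow := dom_hook_hook_two a m
  have hup := dom_hook_two_hook_succ a m
  refine ⟨fun ⟨hν, hl, hu⟩ => eq_of_dom_hook_of_dom_hook_succ hν hl hu, ?_⟩
  rintro (rfl | rfl | rfl)
  · exact ⟨by simpa [add_assoc] using isPartitionOf_hook (a := a) (by omega) (m + 2),
      Dom.refl _, hlow.trans hup⟩
  · exact ⟨by simpa [add_assoc, add_comm 2] using isPartitionOf_hook_two ha m, hlow, hup⟩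
  · exact ⟨by simpa [add_assoc, add_comm 1] using
        isPartitionOf_hook (a := a + 1) (by omega) (m + 1), hlow.trans hup, Dom.refl _⟩

/-- For `a ≥ 3` and `y ≥ 1` the dominance interval `[(a,1^{y+1}), (a+1,1^y)]`
on partitions of `a + y + 1` consists of exactly the three distinct partitions
`(a,1^{y+1})`, `(a,2,1^{y-1})` and `(a+1,1^y)`. -/
theorem hook_interval_three_elements (a y : ℕ) (ha : 3 ≤ a) (hy : 1 ≤ y) :
    (∀ ν, (IsPartitionOf (a + y + 1) ν ∧
        Dom (part (a :: List.replicate (y + 1) 1)) (part ν) ∧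
        Dom (part ν) (part ((a + 1) :: List.replicate y 1))) ↔
      (ν = a :: List.replicate (y + 1) 1 ∨
       ν = a :: 2 :: List.replicate (y - 1) 1 ∨
       ν = (a + 1) :: List.replicate y 1)) ∧
    a :: List.replicate (y + 1) 1 ≠ a :: 2 :: List.replicate (y - 1) 1 ∧
    a :: 2 :: List.replicate (y - 1) 1 ≠ (a + 1) :: List.replicate y 1 ∧
    a :: List.replicate (y + 1) 1 ≠ (a + 1) :: List.replicate y 1 := by
  obtain ⟨m, rfl⟩ : ∃ m, y = m + 1 := ⟨y - 1, by omega⟩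
  rw [Nat.add_sub_cancel, show a + (m + 1) + 1 = a + m + 2 by omega]
  exact ⟨mem_hook_interval_iff (by omega), by simp [replicate_succ], by simp, by simp⟩
end

section
/- If λ/μ is a skew diagram such that cols(λ/μ) = rows(λ/μ)' (the sorted column lengths equal the conjugate of the sorted row lengths), then either λ/μ is (a translate of) the Young diagram of a partition or the π-rotation of one; conversely, if λ/μ equals a partition diagram ν or its π-rotation ν^π, then cols(λ/μ) = rows(λ/μ)' = ν'. -/
def conj (l : List ℕ) (i : ℕ) : ℕ := (l.filter (fun p => decide (i + 1 ≤ p))).length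

/-- The cells of the skew diagram `l/m`. -/
def skewCells (l m : List ℕ) : Finset (ℕ × ℕ) :=
  (Finset.range l.length ×ˢ Finset.range (part l 0)).filter
    (fun p => part m p.1 ≤ p.2 ∧ p.2 < part l p.1)

/-- Column lengths of the skew diagram `l/m`. -/
def colLens (l m : List ℕ) : List ℕ :=
  (List.range (part l 0)).map (fun j => conj l j - conj m j)

/-- Row lengths of the skew diagram `l/m`. -/
def rowLens (l m : List ℕ) : List ℕ :=
  (List.range l.length).map (fun i => part l i - part m i)

/-!
Reading `c = r'` backwards gives `r = c'`. The first identity says the longest column has as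
many cells as there are nonempty rows; skew rows being intervals `[mᵢ, lᵢ)`, the nonempty rows
then form a block `[s, e)` of consecutive rows that all meet one column. The second identity
says that the longest row has as many cells as there are nonempty columns, `l_s - m_{e-1}`, and
the shortest nonempty row as many as there are columns meeting every row, `l_{e-1} - m_s`. As
`l` and `m` decrease weakly, the longest row `i₀` forces `l` constant on `[s, i₀]` and `m` on
`[i₀, e)`, the shortest row `i₁` forces `m` constant on `[s, i₁]` and `l` on `[i₁, e)`. So `m`
or `l` is constant on the block: the rows are left- or right-aligned, and `l/m` is a translated
or a π-rotated Young diagram `ν`. In both cases the number of rows longer than `k` is the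
length of the `k`-th column of `ν`, which gives `cols(l/m) = ν'` and the converse.
-/

open Finset

lemma part_eq_zero_of_le {l : List ℕ} {i : ℕ} (h : l.length ≤ i) : part l i = 0 :=
  List.getD_eq_default _ _ h

lemma part_mem {l : List ℕ} {i : ℕ} (h : i < l.length) : part l i ∈ l := by
  rw [part, List.getD_eq_getElem _ _ h]
  exact List.getElem_mem h

lemma part_mem_of_pos {l : List ℕ} {k : ℕ} (h : 0 < part l k) : part l k ∈ l :=
  part_mem (by by_contra! hk; simp [part_eq_zero_of_le hk] at h)

lemma part_antitone {l : List ℕ} (hl : l.Pairwise (· ≥ ·)) : Antitone (part l) := by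
  intro i j hij
  rcases lt_or_ge j l.length with hj | hj
  · rw [part, part, List.getD_eq_getElem _ _ hj, List.getD_eq_getElem _ _ (hij.trans_lt hj)]
    exact hl.sortedGE.getElem_ge_getElem_of_le hij
  · simp [part_eq_zero_of_le hj]

lemma part_pos_iff {l : List ℕ} (hl : ∀ p ∈ l, 0 < p) {i : ℕ} : 0 < part l i ↔ i < l.length :=
  ⟨fun h => by by_contra! hi; simp [part_eq_zero_of_le hi] at h, fun h => hl _ (part_mem h)⟩

lemma lt_part_iff_lt_conj {l : List ℕ} (hl : l.Pairwise (· ≥ ·)) (i k : ℕ) :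
    k < part l i ↔ i < conj l k := by
  induction l generalizing i with
  | nil => simp [part, conj]
  | cons h t ih =>
    by_cases hk : k < h
    · have hconj : conj (h :: t) k = conj t k + 1 := by simp [conj, hk]
      cases i <;> simp [part, hconj, hk, ← ih hl.of_cons]
    · have hconj : conj (h :: t) k = 0 := by
        simp only [conj, List.length_eq_zero_iff, List.filter_eq_nil_iff, decide_eq_true_eq]
        intro a ha
        rcases List.mem_cons.1 ha with rfl | ha
        · omega
        · have := List.rel_of_pairwise_cons hl ha
          omega
      have : part (h :: t) i ≤ h := part_antitone hl (Nat.zero_le i)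
      simp only [hconj, Nat.not_lt_zero, iff_false, not_lt]
      omega

lemma le_part_iff_conj_le {l : List ℕ} (hl : l.Pairwise (· ≥ ·)) (i k : ℕ) :
    part l i ≤ k ↔ conj l k ≤ i := by
  simpa using (lt_part_iff_lt_conj hl i k).not

lemma part_eq_conj_of_forall_part_eq_conj {c r : List ℕ} (hc : c.Pairwise (· ≥ ·))
    (hr : r.Pairwise (· ≥ ·)) (H : ∀ k, part c k = conj r k) (j : ℕ) : part r j = conj c j :=
  eq_of_forall_lt_iff fun k => by rw [lt_part_iff_lt_conj hr, ← H, lt_part_iff_lt_conj hc]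

lemma conj_eq_of_perm {l₁ l₂ : List ℕ} (h : l₁.Perm l₂) (k : ℕ) : conj l₁ k = conj l₂ k :=
  (h.filter _).length_eq

lemma conj_map_range (f : ℕ → ℕ) (n k : ℕ) :
    conj ((List.range n).map f) k = ((range n).filter (fun i => k < f i)).card := by
  rw [Finset.card_def, Finset.filter_val, Finset.range_val, Multiset.range, Multiset.filter_coe,
    Multiset.coe_card, conj, List.filter_map, List.length_map]
  rfl

def YoungDiagram.ofAntitone (R : ℕ) (w : ℕ → ℕ) (hw : Antitone w) : YoungDiagram where
  cells := (range R ×ˢ range (w 0)).filter (fun p => p.2 < w p.1)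
  isLowerSet := by
    rintro ⟨t, u⟩ ⟨t', u'⟩ ⟨ht : t' ≤ t, hu : u' ≤ u⟩ h
    simp only [coe_filter, mem_product, mem_range, Set.mem_ofPred_eq] at h ⊢
    have := hw ht
    have := hw (Nat.zero_le t')
    omega

lemma YoungDiagram.mem_cells_ofAntitone {R : ℕ} {w : ℕ → ℕ} {hw : Antitone w} {t u : ℕ} :
    (t, u) ∈ (ofAntitone R w hw).cells ↔ t < R ∧ u < w t := by
  simp only [ofAntitone, mem_filter, mem_product, mem_range]
  have := hw (Nat.zero_le t)
  omega

lemma card_filter_fst_image_eq_rowLen {ν : YoungDiagram} {σ τ : ℕ → ℕ}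
    (hσ : Set.InjOn σ {t | (t, 0) ∈ ν}) (hτ : Set.InjOn τ {u | (0, u) ∈ ν}) {t : ℕ}
    (ht : (t, 0) ∈ ν) :
    ((ν.cells.image (fun p => (σ p.1, τ p.2))).filter (·.1 = σ t)).card = ν.rowLen t := by
  have hrow (p : ℕ × ℕ) (hp : p ∈ ν) : (p.1, 0) ∈ ν := ν.up_left_mem le_rfl (Nat.zero_le _) hp
  have hcol (p : ℕ × ℕ) (hp : p ∈ ν) : (0, p.2) ∈ ν := ν.up_left_mem (Nat.zero_le _) le_rfl hp
  rw [filter_image, card_image_of_injOn, ν.rowLen_eq_card, YoungDiagram.row]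
  · congr 1
    refine filter_congr fun p hp => ⟨fun h => hσ (hrow p hp) ht h, congrArg σ⟩
  · intro p hp q hq hpq
    simp only [coe_filter, Set.mem_ofPred_eq, YoungDiagram.mem_cells] at hp hq
    simp only [Prod.mk.injEq] at hpq
    exact Prod.ext (hσ (hrow p hp.1) (hrow q hq.1) hpq.1) (hτ (hcol p hp.1) (hcol q hq.1) hpq.2)

lemma eqOn_or_eqOn_of_extremal_rows {a b : ℕ → ℕ} (ha : Antitone a) (hb : Antitone b)
    {s e i₀ i₁ : ℕ} (hab : a s ≤ b (e - 1)) (hi₀ : i₀ ∈ Ico s e) (hi₁ : i₁ ∈ Ico s e)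
    (h₀ : b i₀ - a i₀ = b s - a (e - 1)) (h₁ : b i₁ - a i₁ = b (e - 1) - a s) :
    (∀ i ∈ Ico s e, a i = a s) ∨ ∀ i ∈ Ico s e, b i = b s := by
  rw [mem_Ico] at hi₀ hi₁
  have hrow₀ : b i₀ = b s ∧ a i₀ = a (e - 1) := by
    have := ha hi₀.1; have := hb hi₀.1
    have := ha (show i₀ ≤ e - 1 by omega); have := hb (show i₀ ≤ e - 1 by omega)
    omega
  have hrow₁ : b i₁ = b (e - 1) ∧ a i₁ = a s := by
    have := ha hi₁.1; have := hb hi₁.1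
    have := ha (show i₁ ≤ e - 1 by omega); have := hb (show i₁ ≤ e - 1 by omega)
    omega
  rcases le_total i₀ i₁ with h | h
  · refine .inl fun i hi => ?_
    rw [mem_Ico] at hi
    rcases le_total i i₁ with h' | h'
    · exact le_antisymm (ha hi.1) (hrow₁.2 ▸ ha h')
    · have := ha (h.trans h'); have := ha (show i ≤ e - 1 by omega)
      have := ha h; have := ha hi₀.1
      omega
  · refine .inr fun i hi => ?_
    rw [mem_Ico] at hi
    rcases le_total i i₀ with h' | h'
    · exact le_antisymm (hb hi.1) (hrow₀.1 ▸ hb h')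
    · have := hb (h.trans h'); have := hb (show i ≤ e - 1 by omega)
      have := hb h; have := hb hi₁.1
      omega

def rowsLongerThan (l m : List ℕ) (k : ℕ) : Finset ℕ :=
  (range l.length).filter (fun i => k < part l i - part m i)

def colsLongerThan (l m : List ℕ) (k : ℕ) : Finset ℕ :=
  (range (part l 0)).filter (fun j => k < conj l j - conj m j)

section Skew

variable {l m : List ℕ}

lemma conj_eq_card_rowsLongerThan {r : List ℕ} (hr : r.Perm (rowLens l m)) (k : ℕ) :
    conj r k = (rowsLongerThan l m k).card :=
  (conj_eq_of_perm hr k).trans (conj_map_range _ _ _)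

lemma conj_eq_card_colsLongerThan {c : List ℕ} (hc : c.Perm (colLens l m)) (k : ℕ) :
    conj c k = (colsLongerThan l m k).card :=
  (conj_eq_of_perm hc k).trans (conj_map_range _ _ _)

lemma mem_skewCells (hls : l.Pairwise (· ≥ ·)) (hlpos : ∀ p ∈ l, 0 < p) {i j : ℕ} :
    (i, j) ∈ skewCells l m ↔ part m i ≤ j ∧ j < part l i := by
  simp only [skewCells, mem_filter, mem_product, mem_range, and_iff_right_iff_imp]
  intro ⟨_, hj⟩
  exact ⟨(part_pos_iff hlpos).1 (by omega), hj.trans_le (part_antitone hls (Nat.zero_le i))⟩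

lemma mem_rowsLongerThan_zero (hlpos : ∀ p ∈ l, 0 < p) {i : ℕ} :
    i ∈ rowsLongerThan l m 0 ↔ part m i < part l i := by
  simp only [rowsLongerThan, mem_filter, mem_range]
  exact ⟨fun h => by omega, fun h => ⟨(part_pos_iff hlpos).1 (by omega), by omega⟩⟩

lemma card_filter_fst_skewCells (hls : l.Pairwise (· ≥ ·))
    (hlpos : ∀ p ∈ l, 0 < p) (i : ℕ) :
    ((skewCells l m).filter (·.1 = i)).card = part l i - part m i := by
  have : (skewCells l m).filter (·.1 = i) =
      (Ico (part m i) (part l i)).map ⟨(i, ·), Prod.mk_right_injective i⟩ := by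
    ext ⟨x, y⟩
    simp only [mem_filter, mem_skewCells hls hlpos, mem_map, mem_Ico, Function.Embedding.coeFn_mk,
      Prod.mk.injEq]
    constructor
    · rintro ⟨h, rfl⟩
      exact ⟨y, h, rfl, rfl⟩
    · rintro ⟨y, h, rfl, rfl⟩
      exact ⟨h, rfl⟩
  rw [this, card_map, Nat.card_Ico]

lemma mem_Ico_conj_iff (hls : l.Pairwise (· ≥ ·)) (hms : m.Pairwise (· ≥ ·)) {i j : ℕ} :
    i ∈ Ico (conj m j) (conj l j) ↔ part m i ≤ j ∧ j < part l i := by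
  rw [mem_Ico, le_part_iff_conj_le hms, lt_part_iff_lt_conj hls]

lemma Ico_conj_subset_rowsLongerThan_zero (hls : l.Pairwise (· ≥ ·)) (hlpos : ∀ p ∈ l, 0 < p)
    (hms : m.Pairwise (· ≥ ·)) (j : ℕ) : Ico (conj m j) (conj l j) ⊆ rowsLongerThan l m 0 := by
  intro i hi
  rw [mem_Ico_conj_iff hls hms] at hi
  exact (mem_rowsLongerThan_zero hlpos).2 (by omega)

lemma rowsLongerThan_zero_eq_Ico (hls : l.Pairwise (· ≥ ·)) (hlpos : ∀ p ∈ l, 0 < p)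
    (hms : m.Pairwise (· ≥ ·)) {j : ℕ} (hj : (rowsLongerThan l m 0).card ≤ conj l j - conj m j) :
    rowsLongerThan l m 0 = Ico (conj m j) (conj l j) :=
  (eq_of_subset_of_card_le (Ico_conj_subset_rowsLongerThan_zero hls hlpos hms j)
    (by rwa [Nat.card_Ico])).symm

lemma colsLongerThan_zero_eq_Ico (hls : l.Pairwise (· ≥ ·)) (hlpos : ∀ p ∈ l, 0 < p)
    (hms : m.Pairwise (· ≥ ·)) {j₀ : ℕ}
    (hrows : rowsLongerThan l m 0 = Ico (conj m j₀) (conj l j₀)) (hne : conj m j₀ < conj l j₀) :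
    colsLongerThan l m 0 = Ico (part m (conj l j₀ - 1)) (part l (conj m j₀)) := by
  set s := conj m j₀
  set e := conj l j₀
  have hs : part m s ≤ j₀ := (le_part_iff_conj_le hms _ _).2 le_rfl
  have he : j₀ < part l (e - 1) := (lt_part_iff_lt_conj hls _ _).2 (by omega)
  ext j
  simp only [colsLongerThan, mem_filter, mem_range, mem_Ico, le_part_iff_conj_le hms,
    lt_part_iff_lt_conj hls]
  constructor
  · rintro ⟨-, hj⟩
    have := (Ico_subset_Ico_iff (by omega)).1
      (hrows ▸ Ico_conj_subset_rowsLongerThan_zero hls hlpos hms j)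
    omega
  · rintro ⟨h1, h2⟩
    rcases le_total j₀ j with h | h
    · have := (le_part_iff_conj_le hms _ _).1 (hs.trans h)
      omega
    · have := (lt_part_iff_lt_conj hls _ _).1 (h.trans_lt he)
      omega

lemma colsLongerThan_height_sub_one_eq_Ico (hls : l.Pairwise (· ≥ ·)) (hlpos : ∀ p ∈ l, 0 < p)
    (hms : m.Pairwise (· ≥ ·)) {j₀ : ℕ}
    (hrows : rowsLongerThan l m 0 = Ico (conj m j₀) (conj l j₀)) (hne : conj m j₀ < conj l j₀) :
    colsLongerThan l m (conj l j₀ - conj m j₀ - 1) =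
      Ico (part m (conj m j₀)) (part l (conj l j₀ - 1)) := by
  ext j
  simp only [colsLongerThan, mem_filter, mem_range, mem_Ico, le_part_iff_conj_le hms,
    lt_part_iff_lt_conj hls]
  constructor
  · rintro ⟨-, hj⟩
    have := (Ico_subset_Ico_iff (by omega)).1
      (hrows ▸ Ico_conj_subset_rowsLongerThan_zero hls hlpos hms j)
    omega
  · omega

lemma exists_col_eq_part_of_pos {c : List ℕ} (hc : c.Perm (colLens l m)) {k : ℕ}
    (hk : 0 < part c k) : ∃ j, conj l j - conj m j = part c k := by
  obtain ⟨j, -, hj⟩ := List.mem_map.1 (hc.subset (part_mem_of_pos hk))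
  exact ⟨j, hj⟩

lemma exists_row_eq_part_of_pos {r : List ℕ} (hlpos : ∀ p ∈ l, 0 < p)
    (hr : r.Perm (rowLens l m)) {k : ℕ} (hk : 0 < part r k) :
    ∃ i ∈ rowsLongerThan l m 0, part l i - part m i = part r k := by
  obtain ⟨i, -, hi⟩ := List.mem_map.1 (hr.subset (part_mem_of_pos hk))
  exact ⟨i, (mem_rowsLongerThan_zero hlpos).2 (by omega), hi⟩

lemma exists_skewCells_eq_translate (hls : l.Pairwise (· ≥ ·)) (hlpos : ∀ p ∈ l, 0 < p)
    {s e : ℕ} (hrows : rowsLongerThan l m 0 = Ico s e)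
    (hm : ∀ i ∈ Ico s e, part m i = part m s) :
    ∃ ν : YoungDiagram, ∃ dr dc : ℕ,
      skewCells l m = ν.cells.image (fun p => (p.1 + dr, p.2 + dc)) := by
  have hw : Antitone fun t => part l (t + s) - part m s :=
    fun t t' h => Nat.sub_le_sub_right (part_antitone hls (by omega)) _
  refine ⟨.ofAntitone (e - s) _ hw, s, part m s, ?_⟩
  ext ⟨i, j⟩
  have hrow : part m i < part l i ↔ s ≤ i ∧ i < e := by
    rw [← mem_rowsLongerThan_zero hlpos, hrows, mem_Ico]
  simp only [mem_skewCells hls hlpos, mem_image, Prod.exists,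
    YoungDiagram.mem_cells_ofAntitone, Prod.mk.injEq]
  constructor
  · rintro ⟨h1, h2⟩
    have hi := hrow.1 (by omega)
    have := hm i (mem_Ico.2 hi)
    refine ⟨i - s, j - part m s, ⟨by omega, ?_⟩, by omega, by omega⟩
    rw [Nat.sub_add_cancel hi.1]
    omega
  · rintro ⟨t, u, ⟨ht, hu⟩, rfl, rfl⟩
    have := hm (t + s) (mem_Ico.2 ⟨by omega, by omega⟩)
    omega

lemma exists_skewCells_eq_rotation (hls : l.Pairwise (· ≥ ·)) (hlpos : ∀ p ∈ l, 0 < p)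
    (hms : m.Pairwise (· ≥ ·)) {s e : ℕ} (hrows : rowsLongerThan l m 0 = Ico s e)
    (hl : ∀ i ∈ Ico s e, part l i = part l s) :
    ∃ ν : YoungDiagram, ∃ dr dc : ℕ, (∀ p ∈ ν.cells, p.1 ≤ dr ∧ p.2 ≤ dc) ∧
      skewCells l m = ν.cells.image (fun p => (dr - p.1, dc - p.2)) := by
  have hw : Antitone fun t => part l s - part m (e - 1 - t) :=
    fun t t' h => Nat.sub_le_sub_left (part_antitone hms (by omega)) _
  refine ⟨.ofAntitone (e - s) _ hw, e - 1, part l s - 1, fun ⟨t, u⟩ h => ?_, ?_⟩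
  · rw [YoungDiagram.mem_cells_ofAntitone] at h
    omega
  ext ⟨i, j⟩
  have hrow : part m i < part l i ↔ s ≤ i ∧ i < e := by
    rw [← mem_rowsLongerThan_zero hlpos, hrows, mem_Ico]
  simp only [mem_skewCells hls hlpos, mem_image, Prod.exists,
    YoungDiagram.mem_cells_ofAntitone, Prod.mk.injEq]
  constructor
  · rintro ⟨h1, h2⟩
    have hi := hrow.1 (by omega)
    have := hl i (mem_Ico.2 hi)
    refine ⟨e - 1 - i, part l s - 1 - j, ⟨by omega, ?_⟩, by omega, by omega⟩
    rw [show e - 1 - (e - 1 - i) = i by omega]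
    omega
  · rintro ⟨t, u, ⟨ht, hu⟩, rfl, rfl⟩
    have := hl (e - 1 - t) (mem_Ico.2 ⟨by omega, by omega⟩)
    omega

lemma exists_skewCells_eq_translate_or_rotation {c r : List ℕ} (hls : l.Pairwise (· ≥ ·))
    (hlpos : ∀ p ∈ l, 0 < p) (hms : m.Pairwise (· ≥ ·)) (hc : c.Perm (colLens l m))
    (hcs : c.Pairwise (· ≥ ·)) (hr : r.Perm (rowLens l m)) (hrs : r.Pairwise (· ≥ ·))
    (H : ∀ k, part c k = conj r k) :
    (∃ ν : YoungDiagram, ∃ dr dc : ℕ,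
      skewCells l m = ν.cells.image (fun p => (p.1 + dr, p.2 + dc))) ∨
    (∃ ν : YoungDiagram, ∃ dr dc : ℕ, (∀ p ∈ ν.cells, p.1 ≤ dr ∧ p.2 ≤ dc) ∧
      skewCells l m = ν.cells.image (fun p => (dr - p.1, dc - p.2))) := by
  have hrow := conj_eq_card_rowsLongerThan hr
  have hcol (k : ℕ) : part r k = (colsLongerThan l m k).card :=
    (part_eq_conj_of_forall_part_eq_conj hcs hrs H k).trans (conj_eq_card_colsLongerThan hc k)
  rcases Nat.eq_zero_or_pos (rowsLongerThan l m 0).card with hR | hR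
  · refine .inl (exists_skewCells_eq_translate hls hlpos (s := 0) (e := 0) ?_ (by simp))
    rw [Ico_self, ← card_eq_zero, hR]
  obtain ⟨j₀, hj₀⟩ := exists_col_eq_part_of_pos hc (k := 0) (by rwa [H, hrow])
  rw [H, hrow] at hj₀
  have hrows := rowsLongerThan_zero_eq_Ico hls hlpos hms hj₀.ge
  set s := conj m j₀
  set e := conj l j₀
  have hne : s < e := by rw [hrows, Nat.card_Ico] at hR; omega
  have hwidth : part r 0 = part l s - part m (e - 1) := by
    rw [hcol, colsLongerThan_zero_eq_Ico hls hlpos hms hrows hne, Nat.card_Ico]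
  have hheight : part r (e - s - 1) = part l (e - 1) - part m s := by
    rw [hcol, colsLongerThan_height_sub_one_eq_Ico hls hlpos hms hrows hne, Nat.card_Ico]
  have hpos (k : ℕ) (hk : k < e - s) : 0 < part r k := by
    rw [lt_part_iff_lt_conj hrs, hrow, hrows, Nat.card_Ico]
    exact hk
  obtain ⟨i₀, hi₀, h₀⟩ := exists_row_eq_part_of_pos hlpos hr (hpos 0 (by omega))
  obtain ⟨i₁, hi₁, h₁⟩ := exists_row_eq_part_of_pos hlpos hr (hpos (e - s - 1) (by omega))
  have hcommon : part m s ≤ part l (e - 1) :=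
    ((le_part_iff_conj_le hms _ _).2 le_rfl).trans ((lt_part_iff_lt_conj hls _ _).2 (by omega)).le
  rw [hrows] at hi₀ hi₁
  rcases eqOn_or_eqOn_of_extremal_rows (part_antitone hms) (part_antitone hls) hcommon hi₀ hi₁
    (h₀.trans hwidth) (h₁.trans hheight) with hm | hl
  · exact .inl (exists_skewCells_eq_translate hls hlpos hrows hm)
  · exact .inr (exists_skewCells_eq_rotation hls hlpos hms hrows hl)

lemma card_rowsLongerThan_of_eq_image (hls : l.Pairwise (· ≥ ·))
    (hlpos : ∀ p ∈ l, 0 < p) {ν : YoungDiagram} {σ τ : ℕ → ℕ}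
    (hσ : Set.InjOn σ {t | (t, 0) ∈ ν}) (hτ : Set.InjOn τ {u | (0, u) ∈ ν})
    (hE : skewCells l m = ν.cells.image (fun p => (σ p.1, τ p.2))) (k : ℕ) :
    (rowsLongerThan l m k).card = ν.colLen k := by
  have hρ (t : ℕ) (ht : (t, 0) ∈ ν) : part l (σ t) - part m (σ t) = ν.rowLen t := by
    rw [← card_filter_fst_skewCells hls hlpos, hE, card_filter_fst_image_eq_rowLen hσ hτ ht]
  have hsupp (i : ℕ) (hi : part m i < part l i) : ∃ t, (t, 0) ∈ ν ∧ σ t = i := by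
    have : (i, part m i) ∈ skewCells l m := (mem_skewCells hls hlpos).2 ⟨le_rfl, hi⟩
    obtain ⟨⟨t, u⟩, htu, h⟩ := mem_image.1 (hE ▸ this)
    exact ⟨t, ν.up_left_mem le_rfl (Nat.zero_le u) htu, congrArg Prod.fst h⟩
  have hcol (t : ℕ) (ht : t < ν.colLen k) : (t, 0) ∈ ν :=
    ν.up_left_mem le_rfl (Nat.zero_le k) (YoungDiagram.mem_iff_lt_colLen.2 ht)
  have : rowsLongerThan l m k = (range (ν.colLen k)).image σ := by
    ext i
    simp only [rowsLongerThan, mem_filter, mem_range, mem_image]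
    constructor
    · rintro ⟨-, hk⟩
      obtain ⟨t, ht, rfl⟩ := hsupp i (by omega)
      rw [hρ t ht, ← YoungDiagram.mem_iff_lt_rowLen, YoungDiagram.mem_iff_lt_colLen] at hk
      exact ⟨t, hk, rfl⟩
    · rintro ⟨t, ht, rfl⟩
      have hk := YoungDiagram.mem_iff_lt_rowLen.1 (YoungDiagram.mem_iff_lt_colLen.2 ht)
      rw [← hρ t (hcol t ht)] at hk
      exact ⟨(part_pos_iff hlpos).1 (by omega), hk⟩
  rw [this, card_image_of_injOn (fun t ht t' ht' => hσ (hcol t (by simpa using ht))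
    (hcol t' (by simpa using ht'))), card_range]

lemma card_rowsLongerThan_of_eq_translate (hls : l.Pairwise (· ≥ ·))
    (hlpos : ∀ p ∈ l, 0 < p) {ν : YoungDiagram} {dr dc : ℕ}
    (hE : skewCells l m = ν.cells.image (fun p => (p.1 + dr, p.2 + dc))) (k : ℕ) :
    (rowsLongerThan l m k).card = ν.colLen k :=
  card_rowsLongerThan_of_eq_image hls hlpos (add_left_injective dr).injOn
    (add_left_injective dc).injOn hE k

lemma card_rowsLongerThan_of_eq_rotation (hls : l.Pairwise (· ≥ ·))
    (hlpos : ∀ p ∈ l, 0 < p) {ν : YoungDiagram} {dr dc : ℕ}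
    (hbd : ∀ p ∈ ν.cells, p.1 ≤ dr ∧ p.2 ≤ dc)
    (hE : skewCells l m = ν.cells.image (fun p => (dr - p.1, dc - p.2))) (k : ℕ) :
    (rowsLongerThan l m k).card = ν.colLen k := by
  refine card_rowsLongerThan_of_eq_image hls hlpos (fun t ht t' ht' h => ?_)
    (fun u hu u' hu' h => ?_) hE k
  · have := (hbd _ ht).1
    have := (hbd _ ht').1
    simp only at h this
    omega
  · have := (hbd _ hu).2
    have := (hbd _ hu').2
    simp only at h this
    omega

end Skew

theorem cols_eq_rowsConj_iff_partition_or_rotation_general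
    (nl nm : ℕ) (l m : List ℕ)
    (hl : IsPartitionOf nl l) (hm : IsPartitionOf nm m)
    (c r : List ℕ) (hc : c.Perm (colLens l m)) (hcs : c.Pairwise (· ≥ ·))
    (hr : r.Perm (rowLens l m)) (hrs : r.Pairwise (· ≥ ·)) :
    (∀ k, part c k = (r.filter (fun p => decide (k + 1 ≤ p))).length) ↔
      ((∃ ν : YoungDiagram, ∃ dr dc : ℕ,
          skewCells l m = ν.cells.image (fun p => (p.1 + dr, p.2 + dc)) ∧
          ∀ k, part c k = ν.colLen k) ∨
       (∃ ν : YoungDiagram, ∃ dr dc : ℕ,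
          (∀ p ∈ ν.cells, p.1 ≤ dr ∧ p.2 ≤ dc) ∧
          skewCells l m = ν.cells.image (fun p => (dr - p.1, dc - p.2)) ∧
          ∀ k, part c k = ν.colLen k)) := by
  obtain ⟨hls, hlpos, -⟩ := hl
  obtain ⟨hms, -, -⟩ := hm
  have hrow := conj_eq_card_rowsLongerThan hr
  change (∀ k, part c k = conj r k) ↔ _
  constructor
  · intro H
    rcases exists_skewCells_eq_translate_or_rotation hls hlpos hms hc hcs hr hrs H with
      ⟨ν, dr, dc, hE⟩ | ⟨ν, dr, dc, hbd, hE⟩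
    · refine .inl ⟨ν, dr, dc, hE, fun k => ?_⟩
      rw [H, hrow, card_rowsLongerThan_of_eq_translate hls hlpos hE]
    · refine .inr ⟨ν, dr, dc, hbd, hE, fun k => ?_⟩
      rw [H, hrow, card_rowsLongerThan_of_eq_rotation hls hlpos hbd hE]
  · rintro (⟨ν, dr, dc, hE, hcol⟩ | ⟨ν, dr, dc, hbd, hE, hcol⟩) k
    · rw [hcol, ← card_rowsLongerThan_of_eq_translate hls hlpos hE, ← hrow]
    · rw [hcol, ← card_rowsLongerThan_of_eq_rotation hls hlpos hbd hE, ← hrow]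

/-- For a skew diagram `l/m` with `c` the decreasing sort of the column lengths
and `r` the decreasing sort of the row lengths: `cols(l/m) = rows(l/m)'` holds
iff `l/m` is a translate of the Young diagram of some partition `ν` or of the
π-rotation of one; and in that case `cols(l/m) = rows(l/m)' = ν'`. -/
theorem cols_eq_rowsConj_iff_partition_or_rotation
    (nl nm : ℕ) (l m : List ℕ)
    (hl : IsPartitionOf nl l) (hm : IsPartitionOf nm m)
    (hsub : ∀ i, part m i ≤ part l i)
    (c r : List ℕ) (hc : c.Perm (colLens l m)) (hcs : c.Pairwise (· ≥ ·))
    (hr : r.Perm (rowLens l m)) (hrs : r.Pairwise (· ≥ ·)) :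
    (∀ k, part c k = (r.filter (fun p => decide (k + 1 ≤ p))).length) ↔
      ((∃ ν : YoungDiagram, ∃ dr dc : ℕ,
          skewCells l m = ν.cells.image (fun p => (p.1 + dr, p.2 + dc)) ∧
          ∀ k, part c k = ν.colLen k) ∨
       (∃ ν : YoungDiagram, ∃ dr dc : ℕ,
          (∀ p ∈ ν.cells, p.1 ≤ dr ∧ p.2 ≤ dc) ∧
          skewCells l m = ν.cells.image (fun p => (dr - p.1, dc - p.2)) ∧
          ∀ k, part c k = ν.colLen k)) :=
  cols_eq_rowsConj_iff_partition_or_rotation_general nl nm l m hl hm c r hc hcs hr hrs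
end
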